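/- Combining the estimator error bound and the similarity-transform bound: if ε > 0 and E[‖K̂−K‖_F] ≤ (√Δ/√T)·√(E[Tr(Σ̂₀)]·E[‖Σ̂₀⁻¹‖_F²]), then with probability at least 1−ε, ‖P̂ − P‖_F ≤ (√Δ ‖Λ‖₂‖Λ⁻¹‖₂/(ε√T))·√(E[Tr(Σ̂₀)]·E[‖Σ̂₀⁻¹‖_F²]), where P̂ = Λ⁻¹K̂ᵀΛ and P = Λ⁻¹KᵀΛ. -/

import Mathlib

/-!
Since `P̂ - P = Λ⁻¹ (K̂ - K)ᵀ Λ` and the Frobenius norm is submultiplicative against the spectral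
norm on either side (on the right by transposing, as `‖Aᵀ‖₂ = ‖A‖₂`), pointwise
`‖P̂ - P‖_F ≤ ‖Λ‖₂ ‖Λ⁻¹‖₂ ‖K̂ - K‖_F`. Markov's inequality for `‖K̂ - K‖_F` at level `B / ε`,
with `B` the assumed bound on its mean, bounds the probability of the complementary event by `ε`.
-/

open MeasureTheory Matrix

noncomputable def frobNorm {N : ℕ} (M : Matrix (Fin N) (Fin N) ℝ) : ℝ :=
  Real.sqrt (∑ i, ∑ j, (M i j) ^ 2)

noncomputable def specNorm {N : ℕ} (M : Matrix (Fin N) (Fin N) ℝ) : ℝ :=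
  ‖(Matrix.toEuclideanCLM (𝕜 := ℝ) M : EuclideanSpace ℝ (Fin N) →L[ℝ] EuclideanSpace ℝ (Fin N))‖

open scoped Matrix.Norms.L2Operator in
lemma specNorm_transpose {N : ℕ} (A : Matrix (Fin N) (Fin N) ℝ) : specNorm Aᵀ = specNorm A := by
  simpa [specNorm, l2_opNorm_toEuclideanCLM] using l2_opNorm_conjTranspose A

lemma frobNorm_nonneg {N : ℕ} (M : Matrix (Fin N) (Fin N) ℝ) : 0 ≤ frobNorm M :=
  Real.sqrt_nonneg _

lemma frobNorm_transpose {N : ℕ} (M : Matrix (Fin N) (Fin N) ℝ) : frobNorm Mᵀ = frobNorm M := by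
  rw [frobNorm, Finset.sum_comm]
  rfl

lemma frobNorm_sq_eq_sum_norm_sq_col {N : ℕ} (M : Matrix (Fin N) (Fin N) ℝ) :
    frobNorm M ^ 2 = ∑ j, ‖WithLp.toLp 2 (Mᵀ j)‖ ^ 2 := by
  rw [frobNorm, Real.sq_sqrt (by positivity), Finset.sum_comm]
  simp [EuclideanSpace.real_norm_sq_eq]

lemma frobNorm_mul_le_specNorm_mul {N : ℕ} (A M : Matrix (Fin N) (Fin N) ℝ) :
    frobNorm (A * M) ≤ specNorm A * frobNorm M := by
  have hcol (j : Fin N) : (A * M)ᵀ j = A *ᵥ Mᵀ j := by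
    ext i; simp [Matrix.mul_apply, Matrix.mulVec, dotProduct]
  refine (pow_le_pow_iff_left₀ (frobNorm_nonneg _)
    (mul_nonneg (norm_nonneg _) (frobNorm_nonneg _)) two_ne_zero).mp ?_
  rw [mul_pow, frobNorm_sq_eq_sum_norm_sq_col, frobNorm_sq_eq_sum_norm_sq_col, Finset.mul_sum]
  refine Finset.sum_le_sum fun j _ => ?_
  rw [hcol, ← mul_pow, ← Matrix.toEuclideanCLM_toLp]
  exact pow_le_pow_left₀ (norm_nonneg _) ((toEuclideanCLM (𝕜 := ℝ) A).le_opNorm _) 2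

lemma frobNorm_mul_le_mul_specNorm {N : ℕ} (M A : Matrix (Fin N) (Fin N) ℝ) :
    frobNorm (M * A) ≤ frobNorm M * specNorm A := by
  simpa [← frobNorm_transpose (M * A), Matrix.transpose_mul, specNorm_transpose,
    frobNorm_transpose, mul_comm] using frobNorm_mul_le_specNorm_mul Aᵀ Mᵀ

lemma frobNorm_mul_mul_le {N : ℕ} (B M A : Matrix (Fin N) (Fin N) ℝ) :
    frobNorm (B * M * A) ≤ specNorm B * specNorm A * frobNorm M :=
  calc frobNorm (B * M * A) ≤ specNorm B * (frobNorm M * specNorm A) := by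
        rw [Matrix.mul_assoc]
        exact (frobNorm_mul_le_specNorm_mul B _).trans
          (mul_le_mul_of_nonneg_left (frobNorm_mul_le_mul_specNorm M A) (norm_nonneg _))
    _ = specNorm B * specNorm A * frobNorm M := by ring

lemma frobNorm_mul_transpose_mul_sub_le {N : ℕ} (B A X Y : Matrix (Fin N) (Fin N) ℝ) :
    frobNorm (B * Xᵀ * A - B * Yᵀ * A) ≤ specNorm A * specNorm B * frobNorm (X - Y) := by
  rw [← Matrix.sub_mul, ← Matrix.mul_sub, ← Matrix.transpose_sub, mul_comm (specNorm A),
    ← frobNorm_transpose (X - Y)]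
  exact frobNorm_mul_mul_le B _ A

lemma measure_div_lt_le_ofReal {Ω : Type*} [MeasurableSpace Ω] {μ : Measure Ω} [IsFiniteMeasure μ]
    {g : Ω → ℝ} (hg : 0 ≤ g) (hint : Integrable g μ) {B ε : ℝ} (hB : ∫ ω, g ω ∂μ ≤ B)
    (hε : 0 < ε) : μ {ω | B / ε < g ω} ≤ ENNReal.ofReal ε := by
  rcases (integral_nonneg hg |>.trans hB).eq_or_lt with hB0 | hB0
  · have hg0 : g =ᵐ[μ] 0 :=
      (integral_eq_zero_iff_of_nonneg hg hint).mp (le_antisymm (hB0 ▸ hB) (integral_nonneg hg))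
    refine (measure_mono_null (fun ω hω => ?_) (ae_iff.mp hg0)).trans_le zero_le
    simp only [Set.mem_ofPred_eq, ← hB0, zero_div] at hω ⊢
    exact hω.ne'
  · have hc : 0 < B / ε := div_pos hB0 hε
    have hmarkov : B / ε * μ.real {ω | B / ε ≤ g ω} ≤ B :=
      (mul_meas_ge_le_integral_of_nonneg (ae_of_all μ hg) hint _).trans hB
    have hreal : μ.real {ω | B / ε ≤ g ω} ≤ ε := by
      rwa [← le_div_iff₀' hc, div_div_cancel₀ hB0.ne'] at hmarkov
    calc μ {ω | B / ε < g ω} ≤ μ {ω | B / ε ≤ g ω} :=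
          measure_mono (Set.ofPred_subset_ofPred.mpr fun _ hω => hω.le)
      _ ≤ ENNReal.ofReal ε := (ENNReal.le_ofReal_iff_toReal_le (measure_ne_top μ _) hε.le).mpr hreal

lemma one_sub_le_measure_of_measure_compl_le {Ω : Type*} [MeasurableSpace Ω] {μ : Measure Ω}
    [IsProbabilityMeasure μ] {s : Set Ω} {a : ENNReal} (h : μ sᶜ ≤ a) : 1 - a ≤ μ s := by
  rw [tsub_le_iff_right, ← measure_univ (μ := μ)]
  exact (measure_univ_le_add_compl s).trans (by gcongr)

theorem sample_complexity_pf_general {N : ℕ} {T : ℕ} {Δ : ℝ}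
    {ε : ℝ} (hε : ε ∈ Set.Ioo (0 : ℝ) 1)
    {Ω : Type*} [MeasurableSpace Ω] (μ : Measure Ω) [IsProbabilityMeasure μ]
    (Khat S0 : Ω → Matrix (Fin N) (Fin N) ℝ) (K Λ : Matrix (Fin N) (Fin N) ℝ)
    (Phat : Ω → Matrix (Fin N) (Fin N) ℝ) (P : Matrix (Fin N) (Fin N) ℝ)
    (hPhat : ∀ ω, Phat ω = Λ⁻¹ * (Khat ω).transpose * Λ)
    (hP : P = Λ⁻¹ * K.transpose * Λ)
    (hint : Integrable (fun ω => frobNorm (Khat ω - K)) μ)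
    (hE : ∫ ω, frobNorm (Khat ω - K) ∂μ ≤
      (Real.sqrt Δ / Real.sqrt T) *
        Real.sqrt ((∫ ω, (S0 ω).trace ∂μ) * ∫ ω, frobNorm ((S0 ω)⁻¹) ^ 2 ∂μ)) :
    1 - ENNReal.ofReal ε ≤
      μ {ω | frobNorm (Phat ω - P) ≤
        (Real.sqrt Δ * specNorm Λ * specNorm Λ⁻¹ / (ε * Real.sqrt T)) *
          Real.sqrt ((∫ ω, (S0 ω).trace ∂μ) * ∫ ω, frobNorm ((S0 ω)⁻¹) ^ 2 ∂μ)} := by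
  set B := (Real.sqrt Δ / Real.sqrt T) *
    Real.sqrt ((∫ ω, (S0 ω).trace ∂μ) * ∫ ω, frobNorm ((S0 ω)⁻¹) ^ 2 ∂μ)
  have hRHS : (Real.sqrt Δ * specNorm Λ * specNorm Λ⁻¹ / (ε * Real.sqrt T)) *
      Real.sqrt ((∫ ω, (S0 ω).trace ∂μ) * ∫ ω, frobNorm ((S0 ω)⁻¹) ^ 2 ∂μ) =
      specNorm Λ * specNorm Λ⁻¹ * (B / ε) := by
    simp only [B]; ring
  have hgood : {ω | B / ε < frobNorm (Khat ω - K)}ᶜ ⊆ {ω | frobNorm (Phat ω - P) ≤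
      specNorm Λ * specNorm Λ⁻¹ * (B / ε)} := fun ω hω => by
    simp only [Set.mem_compl_iff, Set.mem_ofPred_eq, not_lt] at hω ⊢
    rw [hPhat, hP]
    exact (frobNorm_mul_transpose_mul_sub_le _ _ _ _).trans
      (mul_le_mul_of_nonneg_left hω (mul_nonneg (norm_nonneg _) (norm_nonneg _)))
  have hbad := measure_div_lt_le_ofReal (fun ω => frobNorm_nonneg _) hint hE hε.1
  rw [hRHS]
  exact (one_sub_le_measure_of_measure_compl_le (by rwa [compl_compl])).trans (measure_mono hgood)

/-- Sample complexity for the Perron–Frobenius matrix: if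
`E[‖K̂-K‖_F] ≤ (√Δ/√T)·√(E[Tr Σ̂₀]·E[‖Σ̂₀⁻¹‖_F²])` and `P̂ = Λ⁻¹K̂ᵀΛ`, `P = Λ⁻¹KᵀΛ` with
`Λ` symmetric positive definite, then with probability at least `1-ε`,
`‖P̂-P‖_F ≤ (√Δ‖Λ‖₂‖Λ⁻¹‖₂/(ε√T))·√(E[Tr Σ̂₀]·E[‖Σ̂₀⁻¹‖_F²])`. -/
theorem sample_complexity_pf {N : ℕ} {T : ℕ} (hT : 0 < T) {Δ : ℝ} (hΔ : 0 ≤ Δ)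
    {ε : ℝ} (hε : ε ∈ Set.Ioo (0 : ℝ) 1)
    {Ω : Type*} [MeasurableSpace Ω] (μ : Measure Ω) [IsProbabilityMeasure μ]
    (Khat S0 : Ω → Matrix (Fin N) (Fin N) ℝ) (K Λ : Matrix (Fin N) (Fin N) ℝ)
    (hΛ : Λ.PosDef) (hΛsymm : Λ.IsSymm)
    (Phat : Ω → Matrix (Fin N) (Fin N) ℝ) (P : Matrix (Fin N) (Fin N) ℝ)
    (hPhat : ∀ ω, Phat ω = Λ⁻¹ * (Khat ω).transpose * Λ)
    (hP : P = Λ⁻¹ * K.transpose * Λ)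
    (hmeas : Measurable fun ω => frobNorm (Khat ω - K))
    (hint : Integrable (fun ω => frobNorm (Khat ω - K)) μ)
    (hE : ∫ ω, frobNorm (Khat ω - K) ∂μ ≤
      (Real.sqrt Δ / Real.sqrt T) *
        Real.sqrt ((∫ ω, (S0 ω).trace ∂μ) * ∫ ω, frobNorm ((S0 ω)⁻¹) ^ 2 ∂μ)) :
    1 - ENNReal.ofReal ε ≤
      μ {ω | frobNorm (Phat ω - P) ≤
        (Real.sqrt Δ * specNorm Λ * specNorm Λ⁻¹ / (ε * Real.sqrt T)) *
          Real.sqrt ((∫ ω, (S0 ω).trace ∂μ) * ∫ ω, frobNorm ((S0 ω)⁻¹) ^ 2 ∂μ)} :=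
  sample_complexity_pf_general hε μ Khat S0 K Λ Phat P hPhat hP hint hE
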